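/- Let Y_1, …, Y_m be real random variables on a common probability space, not necessarily independent, such that each Y_i is centered Gaussian, and let R := Σ_{i ∈ [m]} |Y_i|. Then P[ R ≥ E[R]/2 ] ≥ 1/12. -/

import Mathlib

open MeasureTheory ProbabilityTheory Real Set Filter
open scoped NNReal ENNReal

/-! If `σ_i² = E[Y_i²]`, then `E|Y_i| = √(2/π) σ_i`, so `E[R] = √(2/π) Σ σ_i`, while Minkowski's
inequality in `L²` gives `√E[R²] ≤ Σ σ_i` whatever the joint law of the `Y_i`. Hence
`E[R²] ≤ (π/2) E[R]²`, and the Paley–Zygmund inequality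
`P[R ≥ E[R]/2] ≥ E[R]² / (4 E[R²])` yields the bound `1/(2π) ≥ 1/12`. -/

section PaleyZygmund
variable {Ω : Type*} [MeasurableSpace Ω] {μ : Measure Ω}

lemma integral_mul_le_sqrt_mul_sqrt_of_nonneg {f g : Ω → ℝ} (hf₀ : 0 ≤ᵐ[μ] f)
    (hg₀ : 0 ≤ᵐ[μ] g) (hf : MemLp f 2 μ) (hg : MemLp g 2 μ) :
    ∫ ω, f ω * g ω ∂μ ≤ √(∫ ω, f ω ^ 2 ∂μ) * √(∫ ω, g ω ^ 2 ∂μ) := by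
  have h := integral_mul_le_Lp_mul_Lq_of_nonneg Real.HolderConjugate.two_two hf₀ hg₀
    (by simpa using hf) (by simpa using hg)
  simpa only [Real.rpow_two, ← Real.sqrt_eq_rpow] using h

lemma integral_sq_sum_le_sq_sum_sqrt {ι : Type*} (s : Finset ι) {f : ι → Ω → ℝ}
    (hf₀ : ∀ i, 0 ≤ᵐ[μ] f i) (hf : ∀ i, MemLp (f i) 2 μ) :
    ∫ ω, (∑ i ∈ s, f i ω) ^ 2 ∂μ ≤ (∑ i ∈ s, √(∫ ω, f i ω ^ 2 ∂μ)) ^ 2 := by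
  have hint (i j : ι) : Integrable (fun ω ↦ f i ω * f j ω) μ := (hf i).integrable_mul (hf j)
  calc ∫ ω, (∑ i ∈ s, f i ω) ^ 2 ∂μ = ∑ i ∈ s, ∑ j ∈ s, ∫ ω, f i ω * f j ω ∂μ := by
        simp_rw [sq, Finset.sum_mul_sum]
        rw [integral_finsetSum _ fun i _ ↦ integrable_finsetSum _ fun j _ ↦ hint i j]
        exact Finset.sum_congr rfl fun i _ ↦ integral_finsetSum _ fun j _ ↦ hint i j
    _ ≤ ∑ i ∈ s, ∑ j ∈ s, √(∫ ω, f i ω ^ 2 ∂μ) * √(∫ ω, f j ω ^ 2 ∂μ) := by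
        gcongr with i _ j _
        exact integral_mul_le_sqrt_mul_sqrt_of_nonneg (hf₀ i) (hf₀ j) (hf i) (hf j)
    _ = (∑ i ∈ s, √(∫ ω, f i ω ^ 2 ∂μ)) ^ 2 := by rw [sq, Finset.sum_mul_sum]

lemma setIntegral_le_sqrt_integral_sq_mul_sqrt_measureReal [IsFiniteMeasure μ] {R : Ω → ℝ}
    (hR₀ : 0 ≤ᵐ[μ] R) (hR : MemLp R 2 μ) {A : Set Ω} (hA : MeasurableSet A) :
    ∫ ω in A, R ω ∂μ ≤ √(∫ ω, R ω ^ 2 ∂μ) * √(μ.real A) := by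
  have h1A : MemLp (A.indicator (1 : Ω → ℝ)) 2 μ :=
    memLp_indicator_const 2 hA 1 (Or.inr (measure_ne_top μ A))
  have hsq (ω : Ω) : A.indicator (1 : Ω → ℝ) ω ^ 2 = A.indicator 1 ω := by
    by_cases h : ω ∈ A <;> simp [h]
  calc ∫ ω in A, R ω ∂μ = ∫ ω, R ω * A.indicator 1 ω ∂μ := by
        rw [← integral_indicator hA]
        congr 1 with ω
        by_cases h : ω ∈ A <;> simp [h]
    _ ≤ √(∫ ω, R ω ^ 2 ∂μ) * √(∫ ω, A.indicator (1 : Ω → ℝ) ω ^ 2 ∂μ) :=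
        integral_mul_le_sqrt_mul_sqrt_of_nonneg hR₀
          (Eventually.of_forall (indicator_nonneg fun _ _ ↦ zero_le_one)) hR h1A
    _ = √(∫ ω, R ω ^ 2 ∂μ) * √(μ.real A) := by simp_rw [hsq, integral_indicator_one hA]

theorem paley_zygmund [IsProbabilityMeasure μ] {R : Ω → ℝ} (hRm : Measurable R) (hR₀ : 0 ≤ R)
    (hR : MemLp R 2 μ) {θ : ℝ} (hθ₀ : 0 ≤ θ) (hθ₁ : θ ≤ 1) :
    (1 - θ) ^ 2 * (∫ ω, R ω ∂μ) ^ 2 ≤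
      (∫ ω, R ω ^ 2 ∂μ) * μ.real {ω | θ * ∫ ω', R ω' ∂μ ≤ R ω} := by
  set a := ∫ ω, R ω ∂μ
  set A := {ω | θ * a ≤ R ω}
  have hA : MeasurableSet A := measurableSet_le measurable_const hRm
  have ha₀ : 0 ≤ a := integral_nonneg hR₀
  have hsmall : ∫ ω in Aᶜ, R ω ∂μ ≤ θ * a :=
    calc ∫ ω in Aᶜ, R ω ∂μ ≤ ∫ _ in Aᶜ, θ * a ∂μ :=
          setIntegral_mono_on (hR.integrable one_le_two).integrableOn
            (integrableOn_const (measure_ne_top μ _)) hA.compl fun _ hω ↦ le_of_not_ge hω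
      _ = μ.real Aᶜ * (θ * a) := setIntegral_const _
      _ ≤ θ * a := mul_le_of_le_one_left (by positivity) measureReal_le_one
  have hlarge :=
    setIntegral_le_sqrt_integral_sq_mul_sqrt_measureReal (Eventually.of_forall hR₀) hR hA
  have hsplit : (1 - θ) * a ≤ √(∫ ω, R ω ^ 2 ∂μ) * √(μ.real A) := by
    linarith [integral_add_compl hA (hR.integrable one_le_two)]
  calc (1 - θ) ^ 2 * a ^ 2 = ((1 - θ) * a) ^ 2 := by ring
    _ ≤ (√(∫ ω, R ω ^ 2 ∂μ) * √(μ.real A)) ^ 2 := pow_le_pow_left₀ (mul_nonneg (by linarith) ha₀) hsplit 2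
    _ = (∫ ω, R ω ^ 2 ∂μ) * μ.real A := by
        rw [mul_pow, sq_sqrt (integral_nonneg fun ω ↦ sq_nonneg _), sq_sqrt measureReal_nonneg]

theorem inv_four_mul_le_measureReal_of_integral_sq_le [IsProbabilityMeasure μ] {R : Ω → ℝ}
    (hRm : Measurable R) (hR₀ : 0 ≤ R) (hR : MemLp R 2 μ) {K : ℝ} (hK : 1 ≤ K)
    (hmoments : ∫ ω, R ω ^ 2 ∂μ ≤ K * (∫ ω, R ω ∂μ) ^ 2) :
    (4 * K)⁻¹ ≤ μ.real {ω | (∫ ω', R ω' ∂μ) / 2 ≤ R ω} := by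
  rcases (integral_nonneg hR₀ : 0 ≤ ∫ ω, R ω ∂μ).eq_or_lt with ha | ha
  · have huniv : {ω | (∫ ω', R ω' ∂μ) / 2 ≤ R ω} = univ := by
      ext ω
      simpa [← ha] using hR₀ ω
    rw [huniv, probReal_univ]
    exact inv_le_one_of_one_le₀ (by linarith)
  have hPZ := paley_zygmund (μ := μ) hRm hR₀ hR (θ := 1 / 2) (by norm_num) (by norm_num)
  simp only [one_div_mul_eq_div] at hPZ
  set p := μ.real {ω | (∫ ω', R ω' ∂μ) / 2 ≤ R ω}
  have hKp : 1 / 4 * (∫ ω, R ω ∂μ) ^ 2 ≤ K * p * (∫ ω, R ω ∂μ) ^ 2 := by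
    calc 1 / 4 * (∫ ω, R ω ∂μ) ^ 2 ≤ (∫ ω, R ω ^ 2 ∂μ) * p := by linarith
      _ ≤ K * (∫ ω, R ω ∂μ) ^ 2 * p := by gcongr
      _ = K * p * (∫ ω, R ω ∂μ) ^ 2 := by ring
  rw [inv_le_iff_one_le_mul₀ (by positivity)]
  linarith [le_of_mul_le_mul_right hKp (by positivity)]

end PaleyZygmund

lemma integral_Ioi_mul_exp_neg_mul_sq {b : ℝ} (hb : 0 < b) :
    ∫ x in Ioi (0 : ℝ), x * rexp (-b * x ^ 2) = (2 * b)⁻¹ := by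
  have h := integral_mul_cexp_neg_mul_sq (b := (b : ℂ)) (by simpa using hb)
  rw [← Complex.ofReal_inj, ← integral_complex_ofReal]
  push_cast
  exact h

lemma integral_abs_gaussianReal (v : ℝ≥0) :
    ∫ x, |x| ∂gaussianReal 0 v = √(2 / π) * √v := by
  rcases eq_or_ne v 0 with rfl | hv
  · simp
  have hv₀ : (0 : ℝ) < v := by positivity
  set f : ℝ → ℝ := fun y ↦ y * rexp (-(2 * (v : ℝ))⁻¹ * y ^ 2)
  have hpdf (x : ℝ) : gaussianPDFReal 0 v x • |x| = (√(2 * π * v))⁻¹ * f |x| := by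
    simp only [f, gaussianPDFReal, sub_zero, smul_eq_mul, sq_abs]
    ring_nf
  simp_rw [integral_gaussianReal_eq_integral_smul hv, hpdf]
  rw [integral_const_mul, integral_comp_abs, integral_Ioi_mul_exp_neg_mul_sq (by positivity),
    sqrt_div' _ pi_pos.le, sqrt_mul (by positivity), sqrt_mul zero_le_two]
  field_simp
  rw [sq_sqrt zero_le_two, sq_sqrt hv₀.le]

lemma integral_sq_gaussianReal (v : ℝ≥0) : ∫ x, x ^ 2 ∂gaussianReal 0 v = v := by
  rw [← variance_of_integral_eq_zero aemeasurable_id' integral_id_gaussianReal,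
    variance_fun_id_gaussianReal]

section GaussianLaw
variable {Ω : Type*} [MeasurableSpace Ω] {μ : Measure Ω} {X : Ω → ℝ} {v : ℝ≥0}

lemma memLp_of_map_eq_gaussianReal (hX : AEMeasurable X μ) (hlaw : μ.map X = gaussianReal 0 v)
    (p : ℝ≥0) : MemLp X p μ := by
  have h : MemLp id p (μ.map X) := hlaw ▸ memLp_id_gaussianReal p
  exact (memLp_map_measure_iff aestronglyMeasurable_id hX).mp h

lemma integral_abs_of_map_eq_gaussianReal (hX : AEMeasurable X μ)
    (hlaw : μ.map X = gaussianReal 0 v) : ∫ ω, |X ω| ∂μ = √(2 / π) * √v := by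
  rw [← integral_abs_gaussianReal, ← hlaw, integral_map hX continuous_abs.aestronglyMeasurable]

lemma integral_sq_of_map_eq_gaussianReal (hX : AEMeasurable X μ)
    (hlaw : μ.map X = gaussianReal 0 v) : ∫ ω, X ω ^ 2 ∂μ = v := by
  rw [← integral_sq_gaussianReal, ← hlaw, integral_map hX (continuous_pow 2).aestronglyMeasurable]

theorem integral_sq_sum_abs_le_of_map_eq_gaussianReal {ι : Type*} (s : Finset ι) {Y : ι → Ω → ℝ}
    (hY : ∀ i, AEMeasurable (Y i) μ) (hlaw : ∀ i, ∃ v : ℝ≥0, μ.map (Y i) = gaussianReal 0 v) :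
    ∫ ω, (∑ i ∈ s, |Y i ω|) ^ 2 ∂μ ≤ π / 2 * (∫ ω, ∑ i ∈ s, |Y i ω| ∂μ) ^ 2 := by
  choose v hv using hlaw
  have hY₁ (i : ι) : Integrable (fun ω ↦ |Y i ω|) μ :=
    (memLp_one_iff_integrable.mp (memLp_of_map_eq_gaussianReal (hY i) (hv i) 1)).abs
  have hmean : ∫ ω, ∑ i ∈ s, |Y i ω| ∂μ = √(2 / π) * ∑ i ∈ s, √(v i : ℝ) := by
    rw [integral_finsetSum _ fun i _ ↦ hY₁ i, Finset.mul_sum]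
    exact Finset.sum_congr rfl fun i _ ↦ integral_abs_of_map_eq_gaussianReal (hY i) (hv i)
  have hsecond := integral_sq_sum_le_sq_sum_sqrt s (f := fun i ω ↦ |Y i ω|)
    (fun i ↦ Eventually.of_forall fun ω ↦ abs_nonneg _)
    fun i ↦ (memLp_of_map_eq_gaussianReal (hY i) (hv i) 2).abs
  simp only [sq_abs, integral_sq_of_map_eq_gaussianReal (hY _) (hv _)] at hsecond
  rw [hmean, mul_pow, sq_sqrt (by positivity)]
  refine hsecond.trans_eq ?_
  field_simp

end GaussianLaw

/-- For (not necessarily independent) centered Gaussian random variables `Y_1, …, Y_m`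
and `R := Σ_i |Y_i|`, we have `P[R ≥ E[R]/2] ≥ 1/12`. -/
theorem gaussian_sum_abs_anticoncentration {Ω : Type*} [MeasurableSpace Ω]
    (μ : Measure Ω) [IsProbabilityMeasure μ]
    (m : ℕ) (Y : Fin m → Ω → ℝ)
    (hmeas : ∀ i, Measurable (Y i))
    (hlaw : ∀ i, ∃ v : NNReal, μ.map (Y i) = gaussianReal 0 v) :
    (1 / 12 : ENNReal) ≤
      μ {ω | (∫ ω', (∑ i : Fin m, |Y i ω'|) ∂μ) / 2 ≤ ∑ i : Fin m, |Y i ω|} := by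
  have hR₂ : MemLp (fun ω ↦ ∑ i, |Y i ω|) 2 μ := memLp_finsetSum _ fun i _ ↦
    (memLp_of_map_eq_gaussianReal (hmeas i).aemeasurable (hlaw i).choose_spec 2).abs
  have hp := inv_four_mul_le_measureReal_of_integral_sq_le
    (Finset.measurable_sum _ fun i _ ↦ (hmeas i).abs)
    (fun ω ↦ Finset.sum_nonneg fun i _ ↦ abs_nonneg _) hR₂ (by linarith [pi_gt_three])
    (integral_sq_sum_abs_le_of_map_eq_gaussianReal _ (fun i ↦ (hmeas i).aemeasurable) hlaw)
  have h12 : (1 / 12 : ℝ) ≤ (4 * (π / 2))⁻¹ := by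
    rw [one_div, inv_le_inv₀ (by norm_num) (by positivity)]
    linarith [pi_lt_four]
  simpa using ENNReal.ofReal_le_of_le_toReal (h12.trans hp)
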